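/- Decodability at receiver 1 in the joint-encoding group S_1: Let F be a field and let d_A, d_D, c_D, d_C, d_I, c_I, d_J, c_J, d_K, c_K, d_K', c_K', d_A2, d_D2, c_D2 be nonzero elements of F (the channel coefficients of the links into receiver 1 during the nine channel uses of S_1). Then the linear map F^9 → F^9 sending (a_1, a_4, b_1, b_3, b_4, b_6, c_1, c_2, e_1) to (d_A·a_1, d_D·b_1 + c_D·b_3, d_C·c_1, d_I·a_4 + c_I·c_2, d_J·e_1 + c_J·c_2, d_K·a_1 + c_K·b_3, d_K'·a_4 + c_K'·b_6, d_A2·a_4, d_D2·b_4 + c_D2·b_6) is bijective. Hence receiver 1 can uniquely recover the nine symbols a_1, b_1, b_3, c_1, a_4, c_2, e_1, b_6, b_4 from its nine observations. -/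
import Mathlib



section aux
variable {α : Type*}
@[simp] lemma vec9_0 (a b c d e f g h i : α) : ![a,b,c,d,e,f,g,h,i] (0:Fin 9) = a := rfl
@[simp] lemma vec9_1 (a b c d e f g h i : α) : ![a,b,c,d,e,f,g,h,i] (1:Fin 9) = b := rfl
@[simp] lemma vec9_2 (a b c d e f g h i : α) : ![a,b,c,d,e,f,g,h,i] (2:Fin 9) = c := rfl
@[simp] lemma vec9_3 (a b c d e f g h i : α) : ![a,b,c,d,e,f,g,h,i] (3:Fin 9) = d := rfl
@[simp] lemma vec9_4 (a b c d e f g h i : α) : ![a,b,c,d,e,f,g,h,i] (4:Fin 9) = e := rfl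
@[simp] lemma vec9_5 (a b c d e f g h i : α) : ![a,b,c,d,e,f,g,h,i] (5:Fin 9) = f := rfl
@[simp] lemma vec9_6 (a b c d e f g h i : α) : ![a,b,c,d,e,f,g,h,i] (6:Fin 9) = g := rfl
@[simp] lemma vec9_7 (a b c d e f g h i : α) : ![a,b,c,d,e,f,g,h,i] (7:Fin 9) = h := rfl
@[simp] lemma vec9_8 (a b c d e f g h i : α) : ![a,b,c,d,e,f,g,h,i] (8:Fin 9) = i := rfl
@[simp] lemma vec9_0' (a b c d e f g h i : α) : ![a,b,c,d,e,f,g,h,i] ⟨0, by norm_num⟩ = a := rfl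
@[simp] lemma vec9_1' (a b c d e f g h i : α) : ![a,b,c,d,e,f,g,h,i] ⟨1, by norm_num⟩ = b := rfl
@[simp] lemma vec9_2' (a b c d e f g h i : α) : ![a,b,c,d,e,f,g,h,i] ⟨2, by norm_num⟩ = c := rfl
@[simp] lemma vec9_3' (a b c d e f g h i : α) : ![a,b,c,d,e,f,g,h,i] ⟨3, by norm_num⟩ = d := rfl
@[simp] lemma vec9_4' (a b c d e f g h i : α) : ![a,b,c,d,e,f,g,h,i] ⟨4, by norm_num⟩ = e := rfl
@[simp] lemma vec9_5' (a b c d e f g h i : α) : ![a,b,c,d,e,f,g,h,i] ⟨5, by norm_num⟩ = f := rfl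
@[simp] lemma vec9_6' (a b c d e f g h i : α) : ![a,b,c,d,e,f,g,h,i] ⟨6, by norm_num⟩ = g := rfl
@[simp] lemma vec9_7' (a b c d e f g h i : α) : ![a,b,c,d,e,f,g,h,i] ⟨7, by norm_num⟩ = h := rfl
@[simp] lemma vec9_8' (a b c d e f g h i : α) : ![a,b,c,d,e,f,g,h,i] ⟨8, by norm_num⟩ = i := rfl
lemma fin9_mk0 (h : 0 < 9) : ((⟨0, h⟩ : Fin 9)) = (0 : Fin 9) := rfl
lemma fin9_mk1 (h : 1 < 9) : ((⟨1, h⟩ : Fin 9)) = (1 : Fin 9) := rfl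
lemma fin9_mk2 (h : 2 < 9) : ((⟨2, h⟩ : Fin 9)) = (2 : Fin 9) := rfl
lemma fin9_mk3 (h : 3 < 9) : ((⟨3, h⟩ : Fin 9)) = (3 : Fin 9) := rfl
lemma fin9_mk4 (h : 4 < 9) : ((⟨4, h⟩ : Fin 9)) = (4 : Fin 9) := rfl
lemma fin9_mk5 (h : 5 < 9) : ((⟨5, h⟩ : Fin 9)) = (5 : Fin 9) := rfl
lemma fin9_mk6 (h : 6 < 9) : ((⟨6, h⟩ : Fin 9)) = (6 : Fin 9) := rfl
lemma fin9_mk7 (h : 7 < 9) : ((⟨7, h⟩ : Fin 9)) = (7 : Fin 9) := rfl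
lemma fin9_mk8 (h : 8 < 9) : ((⟨8, h⟩ : Fin 9)) = (8 : Fin 9) := rfl
end aux

set_option maxHeartbeats 2000000 in
/-- Decodability at receiver 1 in the joint-encoding group `S₁`: the linear map
from the nine fresh symbols `(a₁, a₄, b₁, b₃, b₄, b₆, c₁, c₂, e₁)` to the nine
observations of receiver 1 is bijective. -/
theorem rx1_decodable (F : Type*) [Field F]
    (dA dD cD dC dI cI dJ cJ dK cK dK' cK' dA2 dD2 cD2 : F)
    (hdA : dA ≠ 0) (hdD : dD ≠ 0) (hcD : cD ≠ 0) (hdC : dC ≠ 0)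
    (hdI : dI ≠ 0) (hcI : cI ≠ 0) (hdJ : dJ ≠ 0) (hcJ : cJ ≠ 0)
    (hdK : dK ≠ 0) (hcK : cK ≠ 0) (hdK' : dK' ≠ 0) (hcK' : cK' ≠ 0)
    (hdA2 : dA2 ≠ 0) (hdD2 : dD2 ≠ 0) (hcD2 : cD2 ≠ 0) :
    -- input vector v : Fin 9 → F with coordinates
    -- v 0 = a₁, v 1 = a₄, v 2 = b₁, v 3 = b₃, v 4 = b₄, v 5 = b₆,
    -- v 6 = c₁, v 7 = c₂, v 8 = e₁
    Function.Bijective (fun v : Fin 9 → F =>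
      (![dA * v 0,                -- state A
         dD * v 2 + cD * v 3,     -- state D
         dC * v 6,                -- state C
         dI * v 1 + cI * v 7,     -- state I
         dJ * v 8 + cJ * v 7,     -- state J
         dK * v 0 + cK * v 3,     -- state K
         dK' * v 1 + cK' * v 5,   -- state K'
         dA2 * v 1,               -- second state A
         dD2 * v 4 + cD2 * v 5]   -- second state D
       : Fin 9 → F)) := by
  rw [Function.bijective_iff_has_inverse]
  refine ⟨fun w => ![w 0 / dA, w 7 / dA2,
      (w 1 - cD * ((w 5 - dK * (w 0 / dA)) / cK)) / dD,
      (w 5 - dK * (w 0 / dA)) / cK,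
      (w 8 - cD2 * ((w 6 - dK' * (w 7 / dA2)) / cK')) / dD2,
      (w 6 - dK' * (w 7 / dA2)) / cK',
      w 2 / dC,
      (w 3 - dI * (w 7 / dA2)) / cI,
      (w 4 - cJ * ((w 3 - dI * (w 7 / dA2)) / cI)) / dJ], ?_, ?_⟩
  · intro v
    funext i
    fin_cases i <;> simp only [vec9_0, vec9_1, vec9_2, vec9_3, vec9_4, vec9_5, vec9_6, vec9_7, vec9_8, vec9_0', vec9_1', vec9_2', vec9_3', vec9_4', vec9_5', vec9_6', vec9_7', vec9_8', fin9_mk0, fin9_mk1, fin9_mk2, fin9_mk3, fin9_mk4, fin9_mk5, fin9_mk6, fin9_mk7, fin9_mk8] <;> field_simp <;> ring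
  · intro w
    funext i
    fin_cases i <;> simp only [vec9_0, vec9_1, vec9_2, vec9_3, vec9_4, vec9_5, vec9_6, vec9_7, vec9_8, vec9_0', vec9_1', vec9_2', vec9_3', vec9_4', vec9_5', vec9_6', vec9_7', vec9_8', fin9_mk0, fin9_mk1, fin9_mk2, fin9_mk3, fin9_mk4, fin9_mk5, fin9_mk6, fin9_mk7, fin9_mk8] <;> field_simp <;> ring
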